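/- arXiv:2002.02230 — 3 statements merged into one kernel-verified Lean document; each statement's English description precedes it below -/
import Mathlib

section
/- Let H be a complex Hilbert space and let A ∈ B₊(H). Then the range of A is one-dimensional if and only if the set {C ∈ B₊(H) : C ≪ A and A is not B-absolutely continuous with respect to C (i.e., ¬(A ≪ C))} equals {0}. -/
open ContinuousLinearMap Filter Topology

variable {H : Type} [NormedAddCommGroup H] [InnerProductSpace ℂ H] [CompleteSpace H]

/-- The Loewner order on bounded operators: `A ≤ B` iff `B - A` is positive. -/
def Loewner (A B : H →L[ℂ] H) : Prop := (B - A).IsPositive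

/-- `A` is `B`-absolutely continuous: `A` is the strong-operator-topology limit of a
monotone increasing sequence of positive operators, each dominated by a nonnegative
multiple of `B`. -/
def AbsCont (A B : H →L[ℂ] H) : Prop :=
  ∃ f : ℕ → H →L[ℂ] H,
    (∀ n, (f n).IsPositive) ∧
    (∀ m n, m ≤ n → Loewner (f m) (f n)) ∧
    (∀ n, ∃ c : ℝ, 0 ≤ c ∧ Loewner (f n) (c • B)) ∧
    (∀ x : H, Tendsto (fun n => f n x) atTop (𝓝 (A x)))

/-- `A` and `B` are singular: the only positive operator below both (in the Loewner
order) is `0`. -/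
def Singular (A B : H →L[ℂ] H) : Prop :=
  ∀ C : H →L[ℂ] H, C.IsPositive → Loewner C A → Loewner C B → C = 0

/-- An operator range: a subspace which is the range of some bounded operator. -/
def IsOpRange (M : Submodule ℂ H) : Prop := ∃ S : H →L[ℂ] H, LinearMap.range (S : H →ₗ[ℂ] H) = M

/-! If `C ≪ A` then `ker A ≤ ker C`, so for self-adjoint `C` the range of `C` lies in
`(ker A)ᗮ`, which is the range of `A` when the latter is closed. When `A` has rank one, every
positive `C` with this property is a nonnegative multiple of `A`, hence `A ≪ C` unless `C = 0`.
Conversely, if `w = A e ≠ 0`, the Cauchy–Schwarz inequality for the form `⟪A ·, ·⟫` gives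
`rankOne w w ≤ ⟪A e, e⟫ • A`, so `rankOne w w ≪ A`; if the set is `{0}` this forces
`A ≪ rankOne w w`, whence `range A = ℂ ∙ w`. -/

open scoped InnerProductSpace ComplexOrder
open InnerProductSpace (rankOne isPositive_rankOne_self)

namespace ContinuousLinearMap

variable {A C D T : H →L[ℂ] H}

theorem IsPositive.inner_apply_eq_inner_sqrt (hT : T.IsPositive) (x y : H) :
    ⟪T x, y⟫_ℂ = ⟪CFC.sqrt T x, CFC.sqrt T y⟫_ℂ := by
  have hsa : IsSelfAdjoint (CFC.sqrt T) := (CFC.sqrt_nonneg T).isSelfAdjoint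
  conv_lhs => rw [← CFC.sqrt_mul_sqrt_self T ((nonneg_iff_isPositive T).mpr hT)]
  rw [mul_def, comp_apply, ← adjoint_inner_left, hsa.adjoint_eq]

theorem IsPositive.norm_inner_sq_le (hT : T.IsPositive) (x y : H) :
    ‖⟪T x, y⟫_ℂ‖ ^ 2 ≤ RCLike.re ⟪T x, x⟫_ℂ * RCLike.re ⟪T y, y⟫_ℂ := by
  simp only [hT.inner_apply_eq_inner_sqrt, inner_self_eq_norm_sq, ← mul_pow]
  gcongr
  exact norm_inner_le_norm _ _

theorem IsPositive.apply_eq_zero_of_re_inner_self_eq_zero (hT : T.IsPositive) {x : H}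
    (hx : RCLike.re ⟪T x, x⟫_ℂ = 0) : T x = 0 := by
  rw [hT.inner_apply_eq_inner_sqrt, inner_self_eq_norm_sq, sq_eq_zero_iff, norm_eq_zero] at hx
  rw [← CFC.sqrt_mul_sqrt_self T ((nonneg_iff_isPositive T).mpr hT), mul_def, comp_apply, hx,
    map_zero]

theorem IsPositive.ker_le_ker_of_le (hC : C.IsPositive) (h : C ≤ D) : D.ker ≤ C.ker := by
  intro x hx
  refine hC.apply_eq_zero_of_re_inner_self_eq_zero (le_antisymm ?_ (hC.re_inner_nonneg_left x))
  have := h.re_inner_nonneg_left x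
  simp_all

theorem IsSelfAdjoint.range_le_of_orthogonal_le_ker (hT : IsSelfAdjoint T) {K : Submodule ℂ H}
    [K.HasOrthogonalProjection] (h : Kᗮ ≤ T.ker) : T.range ≤ K :=
  calc T.range ≤ T.rangeᗮᗮ := Submodule.le_orthogonal_orthogonal _
    _ = T.kerᗮ := by rw [hT.isStarNormal.orthogonal_range]
    _ ≤ Kᗮᗮ := Submodule.orthogonal_le h
    _ = K := K.orthogonal_orthogonal

theorem IsPositive.rankOne_le_smul (hA : A.IsPositive) (e : H) :
    rankOne ℂ (A e) (A e) ≤ RCLike.re ⟪A e, e⟫_ℂ • A := by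
  have hc : (0 : ℂ) ≤ (RCLike.re ⟪A e, e⟫_ℂ : ℂ) := by
    exact_mod_cast hA.re_inner_nonneg_left e
  rw [le_def, RCLike.real_smul_eq_coe_smul (K := ℂ)]
  refine ⟨(hA.smul_of_nonneg hc).isSymmetric.sub (isPositive_rankOne_self _).isSymmetric,
    fun x => ?_⟩
  rw [reApplyInnerSelf_apply, sub_apply, inner_sub_left, smul_apply,
    InnerProductSpace.rankOne_apply, inner_smul_left, inner_smul_left, RCLike.conj_ofReal,
    RCLike.conj_mul, map_sub, RCLike.re_ofReal_mul, ← RCLike.ofReal_pow, RCLike.ofReal_re]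
  exact sub_nonneg.mpr (hA.norm_inner_sq_le e x)

omit [CompleteSpace H] in
theorem IsPositive.eq_smul_rankOne_of_range_le (hT : T.IsPositive) {w : H}
    (h : T.range ≤ ℂ ∙ w) :
    T = (RCLike.re ⟪T w, w⟫_ℂ / ‖w‖ ^ 4) • rankOne ℂ w w := by
  have hproj : ∀ x, T x = (⟪w, T x⟫_ℂ / ((‖w‖ ^ 2 : ℝ) : ℂ)) • w := fun x => by
    have hx : T x ∈ ℂ ∙ w := h (LinearMap.mem_range_self (T : H →ₗ[ℂ] H) x)
    have := Submodule.starProjection_singleton ℂ (v := w) (T x)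
    rwa [Submodule.starProjection_eq_self_iff.mpr hx] at this
  have hwTw : ⟪w, T w⟫_ℂ = (RCLike.re ⟪T w, w⟫_ℂ : ℂ) := by
    rw [← hT.inner_left_eq_inner_right]
    exact ((isPositive_iff_complex T).mp hT w).1.symm
  set r := RCLike.re ⟪T w, w⟫_ℂ
  ext x
  rw [hproj x, ← hT.inner_left_eq_inner_right, hproj w, inner_smul_left, hwTw, smul_apply,
    InnerProductSpace.rankOne_apply, RCLike.real_smul_eq_coe_smul (K := ℂ), smul_smul]
  congr 1
  simp only [map_div₀, Complex.conj_ofReal, Complex.coe_algebraMap]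
  push_cast
  ring

end ContinuousLinearMap

open ContinuousLinearMap

omit [CompleteSpace H] in
theorem absCont_of_le_smul {A B : H →L[ℂ] H} (hA : A.IsPositive) {c : ℝ} (hc : 0 ≤ c)
    (h : A ≤ c • B) : AbsCont A B :=
  ⟨fun _ => A, fun _ => hA, fun _ _ _ => le_refl A, fun _ => ⟨c, hc, h⟩,
    fun _ => tendsto_const_nhds⟩

omit [CompleteSpace H] in
theorem absCont_zero_left (B : H →L[ℂ] H) : AbsCont 0 B :=
  absCont_of_le_smul isPositive_zero le_rfl (by simp)

theorem AbsCont.ker_le_ker {A B : H →L[ℂ] H} (h : AbsCont A B) : B.ker ≤ A.ker := by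
  obtain ⟨f, hpos, -, hdom, hlim⟩ := h
  intro x hx
  have hfx : ∀ n, f n x = 0 := fun n => by
    obtain ⟨c, -, hc⟩ := hdom n
    exact (hpos n).ker_le_ker_of_le hc (by simp [LinearMap.mem_ker.mp hx])
  exact tendsto_nhds_unique (hlim x) (by simp [hfx])

theorem AbsCont.range_le {A C : H →L[ℂ] H} (hA : IsSelfAdjoint A) (hC : IsSelfAdjoint C)
    [A.range.HasOrthogonalProjection] (h : AbsCont C A) : C.range ≤ A.range :=
  hC.range_le_of_orthogonal_le_ker <| hA.isStarNormal.orthogonal_range ▸ h.ker_le_ker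

theorem AbsCont.range_le_span_singleton {A : H →L[ℂ] H} (hA : IsSelfAdjoint A) {w : H}
    (h : AbsCont A (rankOne ℂ w w)) : A.range ≤ ℂ ∙ w :=
  hA.range_le_of_orthogonal_le_ker fun x hx => h.ker_le_ker <| by
    simp [Submodule.mem_orthogonal_singleton_iff_inner_right.mp hx]

theorem not_absCont_zero_right {A : H →L[ℂ] H} (hA : A ≠ 0) : ¬ AbsCont A 0 := fun h =>
  hA <| ext fun x => h.ker_le_ker (by simp)

omit [CompleteSpace H] in
theorem absCont_of_range_le_span_singleton {A C : H →L[ℂ] H} (hA : A.IsPositive)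
    (hC : C.IsPositive) (hC0 : C ≠ 0) {w : H} (hAw : A.range ≤ ℂ ∙ w)
    (hCw : C.range ≤ ℂ ∙ w) : AbsCont A C := by
  have hA_eq := hA.eq_smul_rankOne_of_range_le hAw
  have hC_eq := hC.eq_smul_rankOne_of_range_le hCw
  set s := RCLike.re ⟪A w, w⟫_ℂ / ‖w‖ ^ 4
  set μ := RCLike.re ⟪C w, w⟫_ℂ / ‖w‖ ^ 4
  have hμ : μ ≠ 0 := fun hμ => hC0 (by rw [hC_eq, hμ, zero_smul])
  have hnonneg : 0 ≤ s / μ := div_nonneg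
    (div_nonneg (hA.re_inner_nonneg_left w) (by positivity))
    (div_nonneg (hC.re_inner_nonneg_left w) (by positivity))
  refine absCont_of_le_smul hA hnonneg (le_of_eq ?_)
  rw [hC_eq, smul_smul, div_mul_cancel₀ _ hμ, ← hA_eq]

/-- A positive operator `A` has one-dimensional range iff the only
positive `C` with `C ≪ A` and `¬(A ≪ C)` is `C = 0`. -/
theorem stmt6 (A : H →L[ℂ] H) (hA : A.IsPositive) :
    Module.finrank ℂ (LinearMap.range (A : H →ₗ[ℂ] H)) = 1 ↔
      {C : H →L[ℂ] H | C.IsPositive ∧ AbsCont C A ∧ ¬ AbsCont A C} = {0} := by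
  constructor
  · intro h1
    have hA0 : A ≠ 0 := by
      rintro rfl
      rw [toLinearMap_zero, LinearMap.range_zero, finrank_bot] at h1
      exact zero_ne_one h1
    obtain ⟨e, he⟩ : ∃ e, A e ≠ 0 := by simpa [ContinuousLinearMap.ext_iff] using hA0
    have hrange : A.range = ℂ ∙ A e :=
      eq_span_singleton_of_mem_of_finrank_eq_one h1 (LinearMap.mem_range_self _ e) he
    refine Set.eq_singleton_iff_unique_mem.mpr
      ⟨⟨isPositive_zero, absCont_zero_left A, not_absCont_zero_right hA0⟩, ?_⟩
    rintro C ⟨hC, hCA, hAC⟩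
    by_contra hC0
    have : FiniteDimensional ℂ A.range := Module.finite_of_finrank_eq_succ h1
    exact hAC (absCont_of_range_le_span_singleton hA hC hC0 hrange.le
      (hrange ▸ hCA.range_le hA.isSelfAdjoint hC.isSelfAdjoint))
  · intro hS
    obtain ⟨⟨-, -, hnot⟩, hunique⟩ := Set.eq_singleton_iff_unique_mem.mp hS
    have hA0 : A ≠ 0 := by
      rintro rfl
      exact hnot (absCont_zero_left 0)
    obtain ⟨e, he⟩ : ∃ e, A e ≠ 0 := by simpa [ContinuousLinearMap.ext_iff] using hA0
    have hwA : AbsCont (rankOne ℂ (A e) (A e)) A := absCont_of_le_smul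
      (isPositive_rankOne_self _) (hA.re_inner_nonneg_left e) (hA.rankOne_le_smul e)
    have hAw : AbsCont A (rankOne ℂ (A e) (A e)) := by
      by_contra hAw
      simpa [he] using hunique _ ⟨isPositive_rankOne_self _, hwA, hAw⟩
    have hrange : A.range ≤ ℂ ∙ A e := hAw.range_le_span_singleton hA.isSelfAdjoint
    rw [le_antisymm hrange <| (Submodule.span_singleton_le_iff_mem _ _).mpr <|
      LinearMap.mem_range_self _ e]
    exact finrank_span_singleton he
end

section
/- Let H be a complex Hilbert space. For A ∈ B₊(H), set A^⊥ := {C ∈ B₊(H) : C ⊥ A}. Then for all A, B ∈ B₊(H): A^⊥ = B^⊥ if and only if ran A^{1/2} = ran B^{1/2}. -/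
set_option synthInstance.maxHeartbeats 1000000
set_option maxHeartbeats 1000000

open ContinuousLinearMap Filter Topology

variable {H : Type} [NormedAddCommGroup H] [InnerProductSpace ℂ H] [CompleteSpace H]

/-!
Singularity is read off from the ranges of square roots: `C ⊥ A` iff
`ran C^{1/2} ∩ ran A^{1/2} = 0`. If `D ≤ C` then `‖D^{1/2} y‖ ≤ ‖C^{1/2} y‖`, so Douglas' lemma
gives `ran D^{1/2} ⊆ ran C^{1/2}`; conversely a common vector `x = C^{1/2} u = A^{1/2} v` with
`‖u‖, ‖v‖ ≤ 1` produces the common minorant `x ⊗ x` of `C` and `A`. Testing `B^⊥ ⊆ A^⊥` on the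
rank-one operators `x ⊗ x`, whose square roots have range `ℂ x`, gives `ran A^{1/2} ⊆ ran B^{1/2}`.
-/

open InnerProductSpace

section Douglas

variable {𝕜 E F G : Type*} [RCLike 𝕜]
  [NormedAddCommGroup E] [InnerProductSpace 𝕜 E] [CompleteSpace E]
  [NormedAddCommGroup F] [InnerProductSpace 𝕜 F] [CompleteSpace F]
  [NormedAddCommGroup G] [InnerProductSpace 𝕜 G] [CompleteSpace G]

theorem mem_range_adjoint_of_norm_inner_le (T : E →L[𝕜] F) {x : E} {K : ℝ}
    (h : ∀ y, ‖inner 𝕜 x y‖ ≤ K * ‖T y‖) : x ∈ (adjoint T).range := by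
  obtain ⟨σ, hσ⟩ := T.toLinearMap.rangeRestrict.exists_rightInverse_of_surjective
    (LinearMap.range_rangeRestrict _)
  have hTσ (z : T.range) : T (σ z) = z :=
    congrArg Subtype.val (LinearMap.congr_fun hσ z)
  let φ : StrongDual 𝕜 T.range :=
    LinearMap.mkContinuous ((innerₛₗ 𝕜 x).comp σ) K fun z => by
      simpa [hTσ] using h (σ z)
  obtain ⟨g, hg, -⟩ := exists_extension_norm_eq _ φ
  refine ⟨(toDual 𝕜 F).symm g, ext_inner_right 𝕜 fun y => ?_⟩
  have hker : inner 𝕜 x (σ ⟨T y, y, rfl⟩ - y) = 0 := by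
    simpa [hTσ] using h (σ ⟨T y, y, rfl⟩ - y)
  rw [coe_coe, adjoint_inner_left, toDual_symm_apply, hg ⟨T y, y, rfl⟩, ← sub_eq_zero]
  simpa [φ, inner_sub_right] using hker

theorem range_adjoint_le_of_norm_le (S : E →L[𝕜] G) (T : E →L[𝕜] F) {K : ℝ}
    (h : ∀ y, ‖S y‖ ≤ K * ‖T y‖) : (adjoint S).range ≤ (adjoint T).range := by
  rintro _ ⟨u, rfl⟩
  refine mem_range_adjoint_of_norm_inner_le T (K := ‖u‖ * K) fun y => ?_
  calc ‖inner 𝕜 (adjoint S u) y‖ = ‖inner 𝕜 u (S y)‖ := by rw [adjoint_inner_left]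
    _ ≤ ‖u‖ * ‖S y‖ := norm_inner_le_norm u (S y)
    _ ≤ ‖u‖ * K * ‖T y‖ := by
      rw [mul_assoc]
      exact mul_le_mul_of_nonneg_left (h y) (norm_nonneg u)

theorem rankOne_le_adjoint_comp_self (T : E →L[𝕜] F) {u : F} (hu : ‖u‖ ≤ 1) :
    rankOne 𝕜 (adjoint T u) (adjoint T u) ≤ adjoint T ∘L T := by
  refine (le_def _ _).2 (isPositive_def'.2 ⟨(isPositive_adjoint_comp_self T).isSelfAdjoint.sub
    (isPositive_rankOne_self _).isSelfAdjoint, fun y => ?_⟩)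
  have hCS : ‖inner 𝕜 (adjoint T u) y‖ ≤ ‖T y‖ := by
    rw [adjoint_inner_left]
    exact (norm_inner_le_norm u (T y)).trans (mul_le_of_le_one_left (norm_nonneg _) hu)
  have hR : RCLike.re (inner 𝕜 (rankOne 𝕜 (adjoint T u) (adjoint T u) y) y) =
      ‖inner 𝕜 (adjoint T u) y‖ ^ 2 := by
    rw [inner_left_rankOne_apply, ← inner_conj_symm, RCLike.conj_mul, ← RCLike.ofReal_pow,
      RCLike.ofReal_re]
  rw [reApplyInnerSelf_apply, sub_apply, inner_sub_left, map_sub, sub_nonneg, hR,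
    ← apply_norm_sq_eq_inner_adjoint_left]
  exact pow_le_pow_left₀ (norm_nonneg _) hCS 2

end Douglas

@[simp]
theorem adjoint_sqrt (A : H →L[ℂ] H) : adjoint (CFC.sqrt A) = CFC.sqrt A :=
  ((nonneg_iff_isPositive _).1 (CFC.sqrt_nonneg A)).isSelfAdjoint.adjoint_eq

theorem adjoint_sqrt_comp_sqrt {A : H →L[ℂ] H} (hA : A.IsPositive) :
    adjoint (CFC.sqrt A) ∘L CFC.sqrt A = A := by
  rw [adjoint_sqrt, ← mul_def, CFC.sqrt_mul_sqrt_self A ((nonneg_iff_isPositive A).2 hA)]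

theorem range_sqrt_le_of_le {C D : H →L[ℂ] H} (hD : D.IsPositive) (hDC : D ≤ C) :
    (CFC.sqrt D).range ≤ (CFC.sqrt C).range := by
  have hC : C.IsPositive :=
    (nonneg_iff_isPositive C).1 (((nonneg_iff_isPositive D).2 hD).trans hDC)
  have hnorm (y : H) : ‖CFC.sqrt D y‖ ≤ 1 * ‖CFC.sqrt C y‖ := by
    rw [one_mul, ← sq_le_sq₀ (norm_nonneg _) (norm_nonneg _), apply_norm_sq_eq_inner_adjoint_left,
      apply_norm_sq_eq_inner_adjoint_left, adjoint_sqrt_comp_sqrt hD, adjoint_sqrt_comp_sqrt hC,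
      ← sub_nonneg, ← map_sub, ← inner_sub_left]
    exact hDC.re_inner_nonneg_left y
  simpa only [adjoint_sqrt] using range_adjoint_le_of_norm_le (CFC.sqrt D) (CFC.sqrt C) hnorm

theorem singular_iff_disjoint_range_sqrt {A C : H →L[ℂ] H} (hC : C.IsPositive)
    (hA : A.IsPositive) : Singular C A ↔ Disjoint (CFC.sqrt C).range (CFC.sqrt A).range := by
  constructor
  · intro hCA
    rw [Submodule.disjoint_def]
    rintro x ⟨u, rfl⟩ ⟨v, hv⟩
    simp only [coe_coe] at hv ⊢
    set s : ℝ := (‖u‖ + ‖v‖ + 1)⁻¹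
    have hs : 0 < s := by positivity
    have hs_le (w : H) (hw : ‖w‖ ≤ ‖u‖ + ‖v‖ + 1) : ‖s • w‖ ≤ 1 := by
      rw [norm_smul, Real.norm_of_nonneg hs.le, inv_mul_le_one₀ (by positivity)]
      exact hw
    have hC' := rankOne_le_adjoint_comp_self (CFC.sqrt C) <| hs_le u <| by
      linarith [norm_nonneg v]
    have hA' := rankOne_le_adjoint_comp_self (CFC.sqrt A) <| hs_le v <| by
      linarith [norm_nonneg u]
    rw [adjoint_sqrt_comp_sqrt hC, adjoint_sqrt, map_smul_of_tower] at hC'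
    rw [adjoint_sqrt_comp_sqrt hA, adjoint_sqrt, map_smul_of_tower, hv] at hA'
    have h0 := hCA _ (isPositive_rankOne_self _) hC' hA'
    simpa [hs.ne'] using h0
  · -- `Loewner D C` is by definition `D ≤ C` in Mathlib's Loewner order.
    intro hdisj D hD hDC hDA
    have hsqrt : CFC.sqrt D = 0 := coe_inj.1 <| LinearMap.range_eq_bot.1 <| eq_bot_iff.2 <|
      (le_inf (range_sqrt_le_of_le hD hDC) (range_sqrt_le_of_le hD hDA)).trans hdisj.eq_bot.le
    rw [← CFC.sqrt_mul_sqrt_self D ((nonneg_iff_isPositive D).2 hD), hsqrt, zero_mul]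

theorem sqrt_rankOne_self (x : H) : CFC.sqrt (rankOne ℂ x x) = ‖x‖⁻¹ • rankOne ℂ x x := by
  refine CFC.sqrt_unique ?_ <|
    smul_nonneg (by positivity) ((nonneg_iff_isPositive _).2 (isPositive_rankOne_self x))
  rcases eq_or_ne x 0 with rfl | hx
  · simp
  · rw [smul_mul_smul, mul_def, rankOne_comp_rankOne, inner_self_eq_norm_sq_to_K,
      ← Complex.coe_smul, smul_smul]
    have hx_norm : (‖x‖ : ℂ) ≠ 0 := by simpa using hx
    convert one_smul ℂ (rankOne ℂ x x)
    push_cast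
    field_simp
    rfl

theorem range_sqrt_rankOne_self (x : H) : (CFC.sqrt (rankOne ℂ x x)).range = ℂ ∙ x := by
  rw [sqrt_rankOne_self]
  apply le_antisymm
  · rintro _ ⟨y, rfl⟩
    simp only [coe_coe, smul_apply, rankOne_apply]
    exact Submodule.smul_of_tower_mem _ _ <|
      Submodule.smul_mem _ _ (Submodule.mem_span_singleton_self x)
  · rw [Submodule.span_singleton_le_iff_mem]
    rcases eq_or_ne x 0 with rfl | hx
    · exact Submodule.zero_mem _
    refine ⟨(‖x‖⁻¹ : ℂ) • x, ?_⟩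
    have hx_norm : (‖x‖ : ℂ) ≠ 0 := by simpa using hx
    simp only [coe_coe, smul_apply, rankOne_apply, inner_smul_right, inner_self_eq_norm_sq_to_K,
      ← Complex.coe_smul, smul_smul]
    convert one_smul ℂ x
    push_cast
    field_simp
    rfl

/-- The set `A^⊥` of positive operators singular to `A`. -/
def singularSet (A : H →L[ℂ] H) : Set (H →L[ℂ] H) := {C | C.IsPositive ∧ Singular C A}

theorem singularSet_subset_singularSet_iff {A B : H →L[ℂ] H} (hA : A.IsPositive)
    (hB : B.IsPositive) :
    singularSet B ⊆ singularSet A ↔ (CFC.sqrt A).range ≤ (CFC.sqrt B).range := by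
  constructor
  · intro h x hxA
    by_contra hxB
    have hxB_sing : rankOne ℂ x x ∈ singularSet B := by
      refine ⟨isPositive_rankOne_self x, (singular_iff_disjoint_range_sqrt
        (isPositive_rankOne_self x) hB).2 ?_⟩
      rw [range_sqrt_rankOne_self]
      exact (Submodule.disjoint_span_singleton.2 fun hx => absurd hx hxB).symm
    have hxA_sing := (singular_iff_disjoint_range_sqrt (isPositive_rankOne_self x) hA).1
      (h hxB_sing).2
    rw [range_sqrt_rankOne_self] at hxA_sing
    exact hxB (Submodule.disjoint_span_singleton.1 hxA_sing.symm hxA ▸ Submodule.zero_mem _)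
  · rintro h C ⟨hC, hCB⟩
    exact ⟨hC, (singular_iff_disjoint_range_sqrt hC hA).2
      (((singular_iff_disjoint_range_sqrt hC hB).1 hCB).mono_right h)⟩

/-- For positive operators `A, B`, the sets of positive operators singular
to `A` and to `B` coincide iff `ran A^{1/2} = ran B^{1/2}`. -/
theorem stmt8 (A B : H →L[ℂ] H) (hA : A.IsPositive) (hB : B.IsPositive) :
    {C : H →L[ℂ] H | C.IsPositive ∧ Singular C A} =
      {C : H →L[ℂ] H | C.IsPositive ∧ Singular C B} ↔
    Set.range ⇑(CFC.sqrt A) = Set.range ⇑(CFC.sqrt B) := by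
  change singularSet A = singularSet B ↔ _
  rw [← coe_coe, ← coe_coe, ← LinearMap.coe_range, ← LinearMap.coe_range, SetLike.coe_set_eq,
    Set.Subset.antisymm_iff, le_antisymm_iff, singularSet_subset_singularSet_iff hA hB,
    singularSet_subset_singularSet_iff hB hA, and_comm]
end

section
/- Let H be a complex Hilbert space, let T : H → H be a bounded, invertible, linear operator, and let A ∈ B₊(H). Then ran(T A^{1/2}) = ran((T A T*)^{1/2}); in particular T(ran A^{1/2}) = ran((T A T*)^{1/2}). -/
/-!
Douglas' lemma: if `S S* = C C*` then `ran S = ran C`. Indeed `y ∈ ran S` iff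
`|⟪y, x⟫| ≤ c ‖S* x‖` for some `c` (Hahn–Banach and Riesz give the converse), and
`‖S* x‖² = re ⟪S S* x, x⟫`. Both `S = T A^{1/2}` and `C = (T A T*)^{1/2}` satisfy
`S S* = T A T*`.
-/

set_option synthInstance.maxHeartbeats 1000000
set_option maxHeartbeats 1000000

open ContinuousLinearMap Filter Topology

variable {H : Type} [NormedAddCommGroup H] [InnerProductSpace ℂ H] [CompleteSpace H]

open scoped InnerProductSpace

section Douglas

variable {𝕜 : Type*} [RCLike 𝕜]

theorem LinearMap.exists_strongDual_comp_eq_of_norm_le {X Y : Type*} [NormedAddCommGroup X]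
    [NormedSpace 𝕜 X] [AddCommGroup Y] [Module 𝕜 Y] (L : Y →ₗ[𝕜] X) (φ : Y →ₗ[𝕜] 𝕜) (c : ℝ)
    (h : ∀ y, ‖φ y‖ ≤ c * ‖L y‖) : ∃ g : StrongDual 𝕜 X, ∀ y, g (L y) = φ y := by
  have hker : LinearMap.ker L ≤ LinearMap.ker φ := fun y hy ↦ by
    simpa [LinearMap.mem_ker.mp hy] using h y
  set ψ : LinearMap.range L →ₗ[𝕜] 𝕜 :=
    (LinearMap.ker L).liftQ φ hker ∘ₗ L.quotKerEquivRange.symm.toLinearMap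
  have hψ : ∀ y, ψ ⟨L y, L.mem_range_self y⟩ = φ y := fun y ↦ by
    simp [ψ, LinearMap.quotKerEquivRange_symm_apply_image]
  have hψ_le : ∀ u : LinearMap.range L, ‖ψ u‖ ≤ max c 0 * ‖u‖ := by
    rintro ⟨_, y, rfl⟩
    rw [hψ y]
    exact (h y).trans (mul_le_mul_of_nonneg_right (le_max_left _ _) (norm_nonneg _))
  obtain ⟨g, hg, -⟩ := exists_extension_norm_eq _ (ψ.mkContinuous _ hψ_le)
  exact ⟨g, fun y ↦ (hg ⟨L y, L.mem_range_self y⟩).trans (hψ y)⟩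

variable {E F G : Type*}
  [NormedAddCommGroup E] [InnerProductSpace 𝕜 E] [CompleteSpace E]
  [NormedAddCommGroup F] [InnerProductSpace 𝕜 F] [CompleteSpace F]
  [NormedAddCommGroup G] [InnerProductSpace 𝕜 G] [CompleteSpace G]

theorem ContinuousLinearMap.mem_range_iff_exists_norm_inner_le (S : E →L[𝕜] F) (y : F) :
    y ∈ Set.range S ↔ ∃ c : ℝ, ∀ x, ‖⟪y, x⟫_𝕜‖ ≤ c * ‖adjoint S x‖ := by
  constructor
  · rintro ⟨z, rfl⟩
    exact ⟨‖z‖, fun x ↦ adjoint_inner_right S z x ▸ norm_inner_le_norm _ _⟩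
  · rintro ⟨c, hc⟩
    obtain ⟨g, hg⟩ := (adjoint S).toLinearMap.exists_strongDual_comp_eq_of_norm_le
      (innerSL 𝕜 y).toLinearMap c hc
    refine ⟨(InnerProductSpace.toDual 𝕜 E).symm g, ext_inner_right 𝕜 fun x ↦ ?_⟩
    rw [← adjoint_inner_right, InnerProductSpace.toDual_symm_apply]
    exact hg x

/-- Douglas' lemma in its symmetric form. -/
theorem ContinuousLinearMap.range_eq_range_of_comp_adjoint_eq (S : E →L[𝕜] F) (C : G →L[𝕜] F)
    (h : S ∘L adjoint S = C ∘L adjoint C) : Set.range S = Set.range C := by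
  have hnorm : ∀ x, ‖adjoint S x‖ = ‖adjoint C x‖ := fun x ↦ by
    rw [apply_norm_eq_sqrt_inner_adjoint_left, apply_norm_eq_sqrt_inner_adjoint_left,
      adjoint_adjoint, adjoint_adjoint, h]
  ext y
  simp only [mem_range_iff_exists_norm_inner_le, hnorm]

end Douglas

theorem ContinuousLinearMap.range_comp_sqrt_eq_range_sqrt_conj {E F : Type*}
    [NormedAddCommGroup E] [InnerProductSpace ℂ E] [CompleteSpace E]
    [NormedAddCommGroup F] [InnerProductSpace ℂ F] [CompleteSpace F]
    (T : E →L[ℂ] F) {A : E →L[ℂ] E} (hA : 0 ≤ A) :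
    Set.range ⇑(T ∘L CFC.sqrt A) = Set.range ⇑(CFC.sqrt (T ∘L A ∘L adjoint T)) := by
  have hconj : (0 : F →L[ℂ] F) ≤ T ∘L A ∘L adjoint T :=
    (nonneg_iff_isPositive _).2 (((nonneg_iff_isPositive A).1 hA).conj_adjoint T)
  refine range_eq_range_of_comp_adjoint_eq _ _ ?_
  rw [(CFC.sqrt_nonneg _).isSelfAdjoint.adjoint_eq, ← mul_def, CFC.sqrt_mul_sqrt_self _ hconj,
    adjoint_comp, (CFC.sqrt_nonneg A).isSelfAdjoint.adjoint_eq, comp_assoc,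
    ← comp_assoc _ _ (adjoint T), ← mul_def, CFC.sqrt_mul_sqrt_self A hA]

/-- For a bounded invertible linear `T` and positive `A`:
`ran (T A^{1/2}) = ran ((T A T*)^{1/2})`; in particular
`T (ran A^{1/2}) = ran ((T A T*)^{1/2})`. -/
theorem stmt15 (T : H ≃L[ℂ] H) (A : H →L[ℂ] H) (hA : A.IsPositive) :
    Set.range ⇑((T : H →L[ℂ] H) * CFC.sqrt A) =
      Set.range ⇑(CFC.sqrt ((T : H →L[ℂ] H) * A * adjoint (T : H →L[ℂ] H))) ∧
    ⇑T '' Set.range ⇑(CFC.sqrt A) =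
      Set.range ⇑(CFC.sqrt ((T : H →L[ℂ] H) * A * adjoint (T : H →L[ℂ] H))) := by
  have hrange : Set.range ⇑((T : H →L[ℂ] H) * CFC.sqrt A) =
      Set.range ⇑(CFC.sqrt ((T : H →L[ℂ] H) * A * adjoint (T : H →L[ℂ] H))) := by
    rw [mul_def, mul_def, mul_def, comp_assoc]
    exact (T : H →L[ℂ] H).range_comp_sqrt_eq_range_sqrt_conj ((nonneg_iff_isPositive A).2 hA)
  exact ⟨hrange, (Set.range_comp _ _).symm.trans hrange⟩
end
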